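/- Assume A1 holds and let A_{m,ε} = {x : min_{1≤j≤G} ‖x - μ_{j,m}‖ ≥ ε}. If θ_m ∈ Θ_G satisfies P(A_{m,ε}) ≥ π_max + ε_7 for some ε_7 > 0, then the noise proportion constraint E_P[π_{0,m}δ/ψ_δ(x,θ_m)] ≤ π_max implies the bound π_{0,m} ≤ π_max · max_{x ∈ A_{m,ε}} η(x, θ_m) / (δ · (P(A_{m,ε}) - π_max)), where η(x,θ) = Σ_{j=1}^G π_j φ(x; μ_j, Σ_j). -/

import Mathlib

open Real Matrix Filter Topology MeasureTheory

/-- smallest eigenvalue (infimum of the spectrum) of a real matrix -/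
noncomputable def lamMin {p : ℕ} (A : Matrix (Fin p) (Fin p) ℝ) : ℝ := sInf (spectrum ℝ A)

/-- largest eigenvalue (supremum of the spectrum) of a real matrix -/
noncomputable def lamMax {p : ℕ} (A : Matrix (Fin p) (Fin p) ℝ) : ℝ := sSup (spectrum ℝ A)

/-- The `p`-dimensional Gaussian density with mean `μ` and covariance matrix `S`. -/
noncomputable def gauss {p : ℕ} (x μ : Fin p → ℝ) (S : Matrix (Fin p) (Fin p) ℝ) : ℝ :=
  (2 * π) ^ (-(p : ℝ) / 2) * S.det ^ (-(1 : ℝ) / 2) *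
    Real.exp (-((x - μ) ⬝ᵥ (S⁻¹ *ᵥ (x - μ))) / 2)

/-- parameter vector θ = (π₀, (π_j), (μ_j), (Σ_j)) of a Gaussian mixture with
improper uniform (noise) component -/
abbrev Param (p G : ℕ) :=
  ℝ × (Fin G → ℝ) × (Fin G → (Fin p → ℝ)) × (Fin G → Matrix (Fin p) (Fin p) ℝ)

/-- noise proportion π₀ -/
def pi0 {p G : ℕ} (θ : Param p G) : ℝ := θ.1

/-- mixture proportions π_j -/
def wt {p G : ℕ} (θ : Param p G) : Fin G → ℝ := θ.2.1

/-- component means μ_j -/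
def mean {p G : ℕ} (θ : Param p G) : Fin G → Fin p → ℝ := θ.2.2.1

/-- component covariance matrices Σ_j -/
def covm {p G : ℕ} (θ : Param p G) : Fin G → Matrix (Fin p) (Fin p) ℝ := θ.2.2.2

/-- the improper pseudo-density ψ_δ(x, θ) = π₀δ + Σ_j π_j φ(x; μ_j, Σ_j) -/
noncomputable def psi {p G : ℕ} (δ : ℝ) (θ : Param p G) (x : Fin p → ℝ) : ℝ :=
  pi0 θ * δ + ∑ j, wt θ j * gauss x (mean θ j) (covm θ j)

/-- λ_min(θ): smallest eigenvalue among all component covariances -/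
noncomputable def lamMinP {p G : ℕ} (θ : Param p G) : ℝ := ⨅ j, lamMin (covm θ j)

/-- λ_max(θ): largest eigenvalue among all component covariances -/
noncomputable def lamMaxP {p G : ℕ} (θ : Param p G) : ℝ := ⨆ j, lamMax (covm θ j)

/-- basic parameter constraints: proportions nonnegative summing to one,
positive definite covariances, eigenratio λ_max(θ)/λ_min(θ) ≤ γ -/
def baseOK {p G : ℕ} (γ : ℝ) (θ : Param p G) : Prop :=
  0 ≤ pi0 θ ∧ (∀ j, 0 ≤ wt θ j) ∧ pi0 θ + ∑ j, wt θ j = 1 ∧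
    (∀ j, (covm θ j).PosDef) ∧ lamMaxP θ ≤ γ * lamMinP θ

/-- the finite-sample constrained parameter space Θ (eigenratio bound and
estimated noise proportion (1/n) Σ_i τ₀(x_i, θ) ≤ π_max) -/
def ThetaN {p G n : ℕ} (δ γ πmax : ℝ) (x : Fin n → Fin p → ℝ) : Set (Param p G) :=
  {θ | baseOK γ θ ∧ (1 / n : ℝ) * ∑ i, pi0 θ * δ / psi δ θ (x i) ≤ πmax}

/-- the improper pseudo-log-likelihood l_n(θ) = (1/n) Σ_i log ψ_δ(x_i, θ) -/
noncomputable def ln {p G n : ℕ} (δ : ℝ) (x : Fin n → Fin p → ℝ) (θ : Param p G) : ℝ :=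
  (1 / n : ℝ) * ∑ i, Real.log (psi δ θ (x i))

/-- the population constrained parameter space Θ_G (noise constraint
E_P[π₀δ/ψ_δ(x,θ)] ≤ π_max, eigenratio constraint, and well-definedness of L) -/
def ThetaG {p : ℕ} (G : ℕ) (P : Measure (Fin p → ℝ)) (δ γ πmax : ℝ) : Set (Param p G) :=
  {θ | baseOK γ θ ∧ Integrable (fun x => Real.log (psi δ θ x)) P ∧
    ∫ x, pi0 θ * δ / psi δ θ x ∂P ≤ πmax}

/-- the population pseudo-log-likelihood L(θ) = E_P[log ψ_δ(x, θ)] -/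
noncomputable def LL {p G : ℕ} (P : Measure (Fin p → ℝ)) (δ : ℝ) (θ : Param p G) : ℝ :=
  ∫ x, Real.log (psi δ θ x) ∂P

/-- assumption A1: P puts mass < 1 - π_max on every set of G points -/
def A1 {p : ℕ} (P : Measure (Fin p → ℝ)) (πmax : ℝ) (G : ℕ) : Prop :=
  ∀ y : Fin G → Fin p → ℝ, P (Set.range y) < ENNReal.ofReal (1 - πmax)

/-!
On `A` the Gaussian part `η` of `ψ_δ` is at most `M = sup_A η`, which is finite because each
Gaussian density is bounded by its normalising constant. Hence the noise ratio `π₀δ/ψ_δ` is at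
least `π₀δ/(π₀δ + M)` on `A`, so integrating it over `A` and using the constraint gives
`π₀δ · P(A) / (π₀δ + M) ≤ π_max`, which rearranges to the claim.
-/

open Set

section Gauss

variable {p : ℕ} {S : Matrix (Fin p) (Fin p) ℝ}

lemma gauss_pos (x μ : Fin p → ℝ) (hS : S.PosDef) : 0 < gauss x μ S := by
  have : 0 < S.det ^ (-(1 : ℝ) / 2) := rpow_pos_of_pos hS.det_pos _
  unfold gauss
  positivity

lemma gauss_le (x μ : Fin p → ℝ) (hS : S.PosDef) :
    gauss x μ S ≤ (2 * π) ^ (-(p : ℝ) / 2) * S.det ^ (-(1 : ℝ) / 2) := by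
  have hquad : 0 ≤ (x - μ) ⬝ᵥ (S⁻¹ *ᵥ (x - μ)) := by
    simpa using hS.inv.posSemidef.re_dotProduct_nonneg (x - μ)
  have : 0 < S.det ^ (-(1 : ℝ) / 2) := rpow_pos_of_pos hS.det_pos _
  unfold gauss
  refine mul_le_of_le_one_right (by positivity) (exp_le_one_iff.2 ?_)
  linarith

lemma continuous_gauss (μ : Fin p → ℝ) (S : Matrix (Fin p) (Fin p) ℝ) :
    Continuous fun x => gauss x μ S := by
  unfold gauss
  simp only [dotProduct, mulVec, Pi.sub_apply]
  fun_prop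

end Gauss

/-- The Gaussian part `η(x, θ) = ∑ⱼ πⱼ φ(x; μⱼ, Σⱼ)` of `ψ_δ`. -/
noncomputable def mixtureDensity {p G : ℕ} (θ : Param p G) (x : Fin p → ℝ) : ℝ :=
  ∑ j, wt θ j * gauss x (mean θ j) (covm θ j)

section Mixture

variable {p G : ℕ} {θ : Param p G}

lemma psi_eq_add_mixtureDensity (δ : ℝ) (θ : Param p G) (x : Fin p → ℝ) :
    psi δ θ x = pi0 θ * δ + mixtureDensity θ x := rfl

lemma mixtureDensity_nonneg (hw : ∀ j, 0 ≤ wt θ j) (hPD : ∀ j, (covm θ j).PosDef)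
    (x : Fin p → ℝ) : 0 ≤ mixtureDensity θ x :=
  Finset.sum_nonneg fun j _ => mul_nonneg (hw j) (gauss_pos x _ (hPD j)).le

lemma bddAbove_range_mixtureDensity (hw : ∀ j, 0 ≤ wt θ j) (hPD : ∀ j, (covm θ j).PosDef) :
    BddAbove (range (mixtureDensity θ)) :=
  ⟨∑ j, wt θ j * ((2 * π) ^ (-(p : ℝ) / 2) * (covm θ j).det ^ (-(1 : ℝ) / 2)), by
    rintro _ ⟨x, rfl⟩
    exact Finset.sum_le_sum fun j _ => mul_le_mul_of_nonneg_left (gauss_le x _ (hPD j)) (hw j)⟩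

lemma continuous_mixtureDensity (θ : Param p G) : Continuous (mixtureDensity θ) :=
  continuous_finsetSum _ fun _ _ => continuous_const.mul (continuous_gauss _ _)

end Mixture

lemma mul_measureReal_le_integral_of_forall_mem_le {α : Type*} [MeasurableSpace α]
    {μ : Measure α} [IsFiniteMeasure μ] {f : α → ℝ} {A : Set α} {c : ℝ} (hf : Integrable f μ)
    (hf0 : 0 ≤ᵐ[μ] f) (hA : ∀ x ∈ A, c ≤ f x) : c * μ.real A ≤ ∫ x, f x ∂μ := by
  have hAe : ∀ᵐ x ∂μ.restrict A, c ≤ f x :=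
    (ae_restrict_iff₀ (aestronglyMeasurable_const.nullMeasurableSet_le hf.1.restrict)).2
      (Eventually.of_forall hA)
  calc c * μ.real A = ∫ _ in A, c ∂μ := by simp [mul_comm]
    _ ≤ ∫ x in A, f x ∂μ := integral_mono_ae (integrable_const c) hf.integrableOn hAe
    _ ≤ ∫ x, f x ∂μ := setIntegral_le_integral hf hf0

lemma mul_sub_le_of_div_add_mul_le {a M s t : ℝ} (ha : 0 ≤ a) (hM : 0 ≤ M) (ht : 0 ≤ t)
    (h : a / (a + M) * s ≤ t) : a * (s - t) ≤ t * M := by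
  rcases ha.eq_or_lt with rfl | ha
  · simpa using mul_nonneg ht hM
  rw [div_mul_eq_mul_div, div_le_iff₀ (by positivity)] at h
  linarith

section NoiseRatio

variable {p G : ℕ} {δ : ℝ} {θ : Param p G}

lemma noiseRatio_nonneg (ha : 0 ≤ pi0 θ * δ) {x : Fin p → ℝ} (hη : 0 ≤ mixtureDensity θ x) :
    0 ≤ pi0 θ * δ / psi δ θ x :=
  div_nonneg ha (by rw [psi_eq_add_mixtureDensity]; linarith)

lemma div_add_le_noiseRatio {M : ℝ} {x : Fin p → ℝ}
    (ha : 0 ≤ pi0 θ * δ) (hη : 0 ≤ mixtureDensity θ x) (hM : mixtureDensity θ x ≤ M) :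
    pi0 θ * δ / (pi0 θ * δ + M) ≤ pi0 θ * δ / psi δ θ x := by
  rcases ha.eq_or_lt with ha | ha
  · simp [← ha]
  rw [psi_eq_add_mixtureDensity]
  exact div_le_div_of_nonneg_left ha.le (by positivity) (by linarith)

lemma integrable_noiseRatio (P : Measure (Fin p → ℝ))
    [IsFiniteMeasure P] (ha : 0 ≤ pi0 θ * δ) (hη : ∀ x, 0 ≤ mixtureDensity θ x) :
    Integrable (fun x => pi0 θ * δ / psi δ θ x) P := by
  have hψ : Measurable (psi δ θ) :=
    (continuous_const.add (continuous_mixtureDensity θ)).measurable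
  refine Integrable.of_bound (measurable_const.div hψ).aestronglyMeasurable 1
    (Eventually.of_forall fun x => ?_)
  rw [Real.norm_of_nonneg (noiseRatio_nonneg ha (hη x)), psi_eq_add_mixtureDensity]
  exact div_le_one_of_le₀ (by linarith [hη x]) (by linarith [hη x])

end NoiseRatio

theorem stmt15_general {p G : ℕ} (P : Measure (Fin p → ℝ)) [IsProbabilityMeasure P]
    (δ πmax ε7 : ℝ) (hδ : 0 < δ) (hπ0 : 0 < πmax) (hε7 : 0 < ε7) (θ : Param p G)
    (h0 : 0 ≤ pi0 θ) (hw : ∀ j, 0 ≤ wt θ j)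
    (hPD : ∀ j, (covm θ j).PosDef)
    (A : Set (Fin p → ℝ))
    (hPA : ENNReal.ofReal (πmax + ε7) ≤ P A)
    (hcon : ∫ x, pi0 θ * δ / psi δ θ x ∂P ≤ πmax) :
    pi0 θ ≤
      πmax * sSup ((fun x => ∑ j, wt θ j * gauss x (mean θ j) (covm θ j)) '' A) /
        (δ * ((P A).toReal - πmax)) := by
  change pi0 θ ≤ πmax * sSup (mixtureDensity θ '' A) / (δ * (P.real A - πmax))
  set M := sSup (mixtureDensity θ '' A)
  have ha : 0 ≤ pi0 θ * δ := mul_nonneg h0 hδ.le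
  have hη := mixtureDensity_nonneg hw hPD
  have hM : 0 ≤ M := Real.sSup_nonneg (by rintro _ ⟨x, -, rfl⟩; exact hη x)
  have hPA' : πmax < P.real A := (lt_add_of_pos_right πmax hε7).trans_le
    ((ENNReal.ofReal_le_iff_le_toReal (measure_ne_top P A)).1 hPA)
  have hratio : pi0 θ * δ / (pi0 θ * δ + M) * P.real A ≤ πmax := by
    refine (mul_measureReal_le_integral_of_forall_mem_le (integrable_noiseRatio P ha hη)
      (Eventually.of_forall fun x => ?_) fun x hx => div_add_le_noiseRatio ha (hη x) ?_).trans hcon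
    · exact noiseRatio_nonneg ha (hη x)
    · exact le_csSup ((bddAbove_range_mixtureDensity hw hPD).mono (image_subset_range _ _))
        ⟨x, hx, rfl⟩
  have hbound := mul_sub_le_of_div_add_mul_le ha hM hπ0.le hratio
  rw [le_div_iff₀ (mul_pos hδ (sub_pos.2 hPA'))]
  linarith

/-- on the event A = A_{ε}(θ) of points at (euclidean) distance ≥ ε from
all component means, if P(A) ≥ π_max + ε₇, then the noise-proportion constraint
E_P[π₀δ/ψ_δ] ≤ π_max implies π₀ ≤ π_max · sup_{x ∈ A} η(x,θ) / (δ (P(A) - π_max)). -/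
theorem stmt15 {p G : ℕ} (hp : 0 < p) (hG : 0 < G)
    (P : Measure (Fin p → ℝ)) [IsProbabilityMeasure P]
    (δ πmax ε ε7 : ℝ) (hδ : 0 < δ) (hπ0 : 0 < πmax) (hπ1 : πmax < 1)
    (hε : 0 < ε) (hε7 : 0 < ε7) (θ : Param p G)
    (h0 : 0 ≤ pi0 θ) (hw : ∀ j, 0 ≤ wt θ j) (hsum : pi0 θ + ∑ j, wt θ j = 1)
    (hPD : ∀ j, (covm θ j).PosDef)
    (A : Set (Fin p → ℝ))
    (hAdef : A = {x | ∀ j, ε ≤ Real.sqrt (∑ i, (x i - mean θ j i) ^ 2)})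
    (hPA : ENNReal.ofReal (πmax + ε7) ≤ P A)
    (hcon : ∫ x, pi0 θ * δ / psi δ θ x ∂P ≤ πmax) :
    pi0 θ ≤
      πmax * sSup ((fun x => ∑ j, wt θ j * gauss x (mean θ j) (covm θ j)) '' A) /
        (δ * ((P A).toReal - πmax)) :=
  stmt15_general P δ πmax ε7 hδ hπ0 hε7 θ h0 hw hPD A hPA hcon
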